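/- In the finite-horizon optimal stopping setup, with V^T the Snell envelope of the terminal formulation (stop rewards g_k, continuation rewards h ≡ 0) and V^I the Snell envelope of the incremental formulation (stop rewards identically 0, per-transition continuation reward d_k(s,s') = g_{k+1}(s') − g_k(s)), the optimal stopping sets of the two formulations coincide at every stage k < N: { s ∈ S : g_k(s) ≥ ∫ V^T_{k+1}(s') dκ_k(s)(ds') } = { s ∈ S : 0 ≥ ∫ (g_{k+1}(s') − g_k(s) + V^I_{k+1}(s')) dκ_k(s)(ds') }. -/

import Mathlib

open MeasureTheory ProbabilityTheory

/-!
Downward induction shows `V^T k = g k + V^I k`: writing `X` for the expected terminal value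
`∫ V^T (k+1) dκ k s`, the incremental continuation value is `X - g k s`, and
`max (g k s) X = g k s + max 0 (X - g k s)`. With that identity both stopping conditions read
`X ≤ g k s`. Pulling `g k s` out of the integral requires `V^T (k+1)` to be integrable, which
follows from it being bounded and measurable, again by downward induction.
-/

section BoundedMeasurable

variable {α : Type*} [MeasurableSpace α]

def BoundedMeasurable (f : α → ℝ) : Prop :=
  Measurable f ∧ ∃ C : ℝ, ∀ x, |f x| ≤ C

lemma BoundedMeasurable.integrable {f : α → ℝ} (hf : BoundedMeasurable f) (μ : Measure α)
    [IsFiniteMeasure μ] : Integrable f μ :=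
  let ⟨hm, C, hC⟩ := hf
  .of_bound hm.aestronglyMeasurable C (.of_forall hC)

lemma BoundedMeasurable.max {f g : α → ℝ} (hf : BoundedMeasurable f) (hg : BoundedMeasurable g) :
    BoundedMeasurable fun x ↦ max (f x) (g x) := by
  obtain ⟨hfm, Cf, hCf⟩ := hf
  obtain ⟨hgm, Cg, hCg⟩ := hg
  refine ⟨hfm.max hgm, Max.max Cf Cg, fun x ↦ ?_⟩
  exact (abs_max_le_max_abs_abs).trans (max_le_max (hCf x) (hCg x))

lemma BoundedMeasurable.integral_kernel {β : Type*} [MeasurableSpace β] {f : β → ℝ}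
    (hf : BoundedMeasurable f) (κ : Kernel α β) [IsMarkovKernel κ] :
    BoundedMeasurable fun x ↦ ∫ y, f y ∂κ x := by
  obtain ⟨hm, C, hC⟩ := hf
  refine ⟨hm.stronglyMeasurable.integral_kernel.measurable, C, fun x ↦ ?_⟩
  simpa using norm_integral_le_of_norm_le_const (μ := κ x) (.of_forall hC : ∀ᵐ y ∂κ x, ‖f y‖ ≤ C)

end BoundedMeasurable

lemma integral_sub_const_add_eq {α : Type*} [MeasurableSpace α] {μ : Measure α}
    [IsProbabilityMeasure μ] {f u v : α → ℝ} (huv : ∀ x, f x = u x + v x) (hf : Integrable f μ)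
    (c : ℝ) : ∫ x, (u x - c + v x) ∂μ = ∫ x, f x ∂μ - c := by
  have hsub : (fun x ↦ u x - c + v x) = fun x ↦ f x - c := by
    funext x
    rw [huv]
    ring
  rw [hsub, integral_sub hf (integrable_const c), integral_const]
  simp

section SnellEnvelopes

variable {S : Type*} [MeasurableSpace S] {N : ℕ} {κ : ℕ → Kernel S S} {g VT VI : ℕ → S → ℝ}

lemma boundedMeasurable_terminal_envelope (hκ : ∀ k < N, IsMarkovKernel (κ k))
    (hg : ∀ k ≤ N, BoundedMeasurable (g k)) (hVTN : ∀ s, VT N s = g N s)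
    (hVTk : ∀ k < N, ∀ s, VT k s = max (g k s) (∫ s', VT (k + 1) s' ∂(κ k s))) :
    ∀ k ≤ N, BoundedMeasurable (VT k) := by
  intro k hk
  induction hk using Nat.decreasingInduction with
  | self => simpa [funext hVTN] using hg N le_rfl
  | of_succ k hk hVT =>
    have := hκ k hk
    rw [funext (hVTk k hk)]
    exact (hg k hk.le).max (hVT.integral_kernel (κ k))

lemma terminal_envelope_eq_add_incremental (hκ : ∀ k < N, IsMarkovKernel (κ k))
    (hVT_int : ∀ k < N, ∀ s, Integrable (VT (k + 1)) (κ k s))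
    (hVTN : ∀ s, VT N s = g N s)
    (hVTk : ∀ k < N, ∀ s, VT k s = max (g k s) (∫ s', VT (k + 1) s' ∂(κ k s)))
    (hVIN : ∀ s, VI N s = 0)
    (hVIk : ∀ k < N, ∀ s, VI k s =
      max 0 (∫ s', (g (k + 1) s' - g k s + VI (k + 1) s') ∂(κ k s))) :
    ∀ k ≤ N, ∀ s, VT k s = g k s + VI k s := by
  intro k hk
  induction hk using Nat.decreasingInduction with
  | self => simp [hVTN, hVIN]
  | of_succ k hk hdecomp =>
    intro s
    have := hκ k hk
    rw [hVTk k hk, hVIk k hk, integral_sub_const_add_eq hdecomp (hVT_int k hk s),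
      ← max_add_add_left, add_zero, add_sub_cancel]

end SnellEnvelopes

/-- **The optimal stopping sets of the terminal and incremental formulations coincide.**
With `V^T` the Snell envelope of the terminal formulation (stop rewards `g k`,
continuation rewards `0`) and `V^I` the Snell envelope of the incremental formulation
(stop rewards `0`, continuation reward `g (k+1) s' − g k s`), at every stage `k < N`:
`{s | g k s ≥ ∫ V^T (k+1) dκ k s} = {s | 0 ≥ ∫ (g (k+1) s' − g k s + V^I (k+1) s') dκ k s}`. -/
theorem optimal_stopping_sets_coincide
    {S : Type*} [MeasurableSpace S] (N : ℕ)
    (κ : ℕ → ProbabilityTheory.Kernel S S) (hκ : ∀ k < N, IsMarkovKernel (κ k))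
    (g : ℕ → S → ℝ)
    (hg_meas : ∀ k ≤ N, Measurable (g k))
    (hg_bdd : ∀ k ≤ N, ∃ C : ℝ, ∀ s, |g k s| ≤ C)
    -- terminal-formulation Snell envelope
    (VT : ℕ → S → ℝ)
    (hVTN : ∀ s, VT N s = g N s)
    (hVTk : ∀ k < N, ∀ s, VT k s =
      max (g k s) (∫ s', VT (k + 1) s' ∂(κ k s)))
    -- incremental-formulation Snell envelope
    (VI : ℕ → S → ℝ)
    (hVIN : ∀ s, VI N s = 0)
    (hVIk : ∀ k < N, ∀ s, VI k s =
      max 0 (∫ s', (g (k + 1) s' - g k s + VI (k + 1) s') ∂(κ k s))) :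
    ∀ k < N,
      {s : S | g k s ≥ ∫ s', VT (k + 1) s' ∂(κ k s)} =
      {s : S | 0 ≥ ∫ s', (g (k + 1) s' - g k s + VI (k + 1) s') ∂(κ k s)} := by
  have hVT_bdd := boundedMeasurable_terminal_envelope hκ
    (fun k hk ↦ ⟨hg_meas k hk, hg_bdd k hk⟩) hVTN hVTk
  have hVT_int : ∀ k < N, ∀ s, Integrable (VT (k + 1)) (κ k s) := fun k hk s ↦
    have := hκ k hk
    (hVT_bdd (k + 1) hk).integrable _
  have hdecomp := terminal_envelope_eq_add_incremental hκ hVT_int hVTN hVTk hVIN hVIk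
  intro k hk
  ext s
  have := hκ k hk
  simp only [Set.mem_ofPred_eq,
    integral_sub_const_add_eq (hdecomp (k + 1) hk) (hVT_int k hk s), ge_iff_le, sub_nonpos]
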